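/- Let n ≥ 1 and let f: {0,1}^n → {0,1} satisfy Pr_x[f(x)=0] ≥ 1/3 over uniformly random x. Then for every x ∈ {0,1}^n with f(x) = 1 there exists an index j ∈ {1,...,n} such that π⁰(x_1…x_{j−1}(1−x_j)) ≥ π⁰(x_1…x_{j−1}x_j) + 2/(3n), where x_1…x_{j−1}b denotes the prefix of x of length j−1 extended by the bit b. -/
import Mathlib


open Finset

/-- `π⁰(s)` for the prefix `s = x_1…x_k`: the fraction, among strings
`z ∈ {0,1}^n` having `x_1…x_k` as a prefix, of those with `f(z) = 0`. -/
noncomputable def piz {n : ℕ} (f : (Fin n → Bool) → Bool) (k : ℕ)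
    (x : Fin n → Bool) : ℝ :=
  ((Finset.univ.filter fun z : Fin n → Bool =>
      (∀ j : Fin n, (j : ℕ) < k → z j = x j) ∧ f z = false).card : ℝ) / 2 ^ (n - k)

/-- `Δ_i(x_1…x_{i-1}) = |π⁰(x_1…x_{i-1}0) - π⁰(x_1…x_{i-1}1)|` (the index `i`
is 0-based here, so the prefix consists of the coordinates `j < i`). -/
noncomputable def Del {n : ℕ} (f : (Fin n → Bool) → Bool) (i : Fin n)
    (x : Fin n → Bool) : ℝ :=
  |piz f ((i : ℕ) + 1) (Function.update x i false) -
    piz f ((i : ℕ) + 1) (Function.update x i true)|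

/-- `f` is almost balanced: `|Pr_x[f(x)=0] - Pr_x[f(x)=1]| ≤ 1/3` over
uniformly random `x ∈ {0,1}^n`. -/
def AlmostBalanced {n : ℕ} (f : (Fin n → Bool) → Bool) : Prop :=
  |((Finset.univ.filter fun x : Fin n → Bool => f x = false).card : ℝ) / 2 ^ n -
    ((Finset.univ.filter fun x : Fin n → Bool => f x = true).card : ℝ) / 2 ^ n| ≤ 1 / 3


lemma piz_split {n : ℕ} (f : (Fin n → Bool) → Bool) (i : Fin n) (x : Fin n → Bool) :
    piz f (i : ℕ) x =
      (piz f ((i:ℕ)+1) (Function.update x i false) +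
       piz f ((i:ℕ)+1) (Function.update x i true)) / 2 := by
  have hb : ∀ (b : Bool) (z : Fin n → Bool),
      ((∀ j : Fin n, (j:ℕ) < (i:ℕ)+1 → z j = Function.update x i b j)
        ↔ ((∀ j : Fin n, (j:ℕ) < (i:ℕ) → z j = x j) ∧ z i = b)) := by
    intro b z
    constructor
    · intro h
      refine ⟨fun j hj => ?_, ?_⟩
      · have hne : j ≠ i := fun e => by subst e; omega
        have := h j (by omega)
        rwa [Function.update_of_ne hne] at this
      · have := h i (by omega)
        rwa [Function.update_self] at this
    · rintro ⟨h1, h2⟩ j hj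
      rcases eq_or_ne j i with rfl | hne
      · rw [Function.update_self]; exact h2
      · rw [Function.update_of_ne hne]
        refine h1 j ?_
        have : (j:ℕ) ≠ (i:ℕ) := fun e => hne (Fin.ext e)
        omega
  unfold piz
  have hcard :
      ((Finset.univ.filter fun z : Fin n → Bool =>
        (∀ j : Fin n, (j : ℕ) < (i:ℕ) → z j = x j) ∧ f z = false).card : ℝ)
      = ((Finset.univ.filter fun z : Fin n → Bool =>
          (∀ j : Fin n, (j : ℕ) < (i:ℕ)+1 → z j = Function.update x i false j) ∧ f z = false).card : ℝ)
        + ((Finset.univ.filter fun z : Fin n → Bool =>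
          (∀ j : Fin n, (j : ℕ) < (i:ℕ)+1 → z j = Function.update x i true j) ∧ f z = false).card : ℝ) := by
    have e1 : (Finset.univ.filter fun z : Fin n → Bool =>
          (∀ j : Fin n, (j : ℕ) < (i:ℕ)+1 → z j = Function.update x i false j) ∧ f z = false)
        = (Finset.univ.filter fun z : Fin n → Bool =>
          ((∀ j : Fin n, (j : ℕ) < (i:ℕ) → z j = x j) ∧ f z = false) ∧ z i = false) := by
      apply Finset.filter_congr; intro z _
      simp only [hb false z]; tauto
    have e2 : (Finset.univ.filter fun z : Fin n → Bool =>
          (∀ j : Fin n, (j : ℕ) < (i:ℕ)+1 → z j = Function.update x i true j) ∧ f z = false)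
        = (Finset.univ.filter fun z : Fin n → Bool =>
          ((∀ j : Fin n, (j : ℕ) < (i:ℕ) → z j = x j) ∧ f z = false) ∧ ¬ (z i = false)) := by
      apply Finset.filter_congr; intro z _
      simp only [hb true z]
      constructor
      · rintro ⟨h1, h2⟩; exact ⟨⟨h1.1, h2⟩, by simp [h1.2]⟩
      · rintro ⟨⟨h1, h2⟩, h3⟩; exact ⟨⟨h1, by simpa using h3⟩, h2⟩
    rw [e1, e2]
    norm_cast
    have key := Finset.card_filter_add_card_filter_not
      (s := Finset.univ.filter fun z : Fin n → Bool =>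
        (∀ j : Fin n, (j : ℕ) < (i:ℕ) → z j = x j) ∧ f z = false)
      (p := fun z => z i = false)
    rw [Finset.filter_filter, Finset.filter_filter] at key
    exact key.symm
  have hpow : (2:ℝ) ^ (n - (i:ℕ)) = 2 ^ (n - ((i:ℕ)+1)) * 2 := by
    have : n - (i:ℕ) = (n - ((i:ℕ)+1)) + 1 := by have := i.isLt; omega
    rw [this, pow_succ]
  rw [hcard, hpow]
  have h2 : (2:ℝ) ^ (n - ((i:ℕ)+1)) ≠ 0 := by positivity
  field_simp

lemma piz_avg {n : ℕ} (f : (Fin n → Bool) → Bool) (i : Fin n) (x : Fin n → Bool) :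
    piz f (i : ℕ) x =
      (piz f ((i:ℕ)+1) x + piz f ((i:ℕ)+1) (Function.update x i (!x i))) / 2 := by
  have h := piz_split f i x
  cases hxi : x i with
  | false =>
      have hself : Function.update x i false = x := by rw [← hxi, Function.update_eq_self]
      rw [h, hself]; simp [hxi]
  | true =>
      have hself : Function.update x i true = x := by rw [← hxi, Function.update_eq_self]
      rw [h, hself, add_comm]; simp [hxi]

lemma piz_n {n : ℕ} (f : (Fin n → Bool) → Bool) (x : Fin n → Bool) (hx : f x = true) :
    piz f n x = 0 := by
  unfold piz
  have : (Finset.univ.filter fun z : Fin n → Bool =>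
      (∀ j : Fin n, (j : ℕ) < n → z j = x j) ∧ f z = false) = ∅ := by
    apply Finset.filter_false_of_mem
    intro z _
    rintro ⟨h1, h2⟩
    have : z = x := funext fun j => h1 j j.isLt
    rw [this, hx] at h2
    exact Bool.noConfusion h2
  rw [this]
  simp

lemma piz_zero {n : ℕ} (f : (Fin n → Bool) → Bool) (x : Fin n → Bool) :
    piz f 0 x =
      ((Finset.univ.filter fun z : Fin n → Bool => f z = false).card : ℝ) / 2 ^ n := by
  unfold piz
  simp

/-- If `n ≥ 1` and `f : {0,1}^n → {0,1}` satisfies `Pr_x[f(x)=0] ≥ 1/3`, then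
for every `x` with `f(x) = 1` there is an index `j` such that
`π⁰(x_1…x_{j-1}(1-x_j)) ≥ π⁰(x_1…x_{j-1}x_j) + 2/(3n)` (indices 0-based). -/
theorem pivotal_step_towards_zero (n : ℕ) (hn : 1 ≤ n)
    (f : (Fin n → Bool) → Bool)
    (hf : 1 / 3 ≤
      ((Finset.univ.filter fun x : Fin n → Bool => f x = false).card : ℝ) / 2 ^ n)
    (x : Fin n → Bool) (hx : f x = true) :
    ∃ j : Fin n, piz f ((j : ℕ) + 1) (Function.update x j (!x j)) ≥
      piz f ((j : ℕ) + 1) x + 2 / (3 * n) := by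
  by_contra hcon
  push_neg at hcon
  set g : ℕ → ℝ := fun k => piz f k x with hg
  have hterm : ∀ j : Fin n, g (j : ℕ) - g ((j : ℕ) + 1) < 1 / (3 * n) := by
    intro j
    have := hcon j
    have havg := piz_avg f j x
    have : piz f ((j:ℕ)+1) (Function.update x j (!x j)) - piz f ((j:ℕ)+1) x < 2 / (3*n) := by
      linarith
    simp only [hg]
    rw [havg]
    have h23 : (2:ℝ)/(3*n) = 2*(1/(3*n)) := by ring
    rw [h23] at this
    linarith
  have hsum : ∑ j ∈ Finset.range n, (g j - g (j+1)) = g 0 - g n :=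
    Finset.sum_range_sub' g n
  have hgn : g n = 0 := piz_n f x hx
  have hg0 : (1:ℝ)/3 ≤ g 0 := by
    simpa [hg, piz_zero] using hf
  have hlt : ∑ j ∈ Finset.range n, (g j - g (j+1)) < n * (1 / (3 * n)) := by
    have hne : (Finset.range n).Nonempty := Finset.nonempty_range_iff.mpr (by omega)
    calc ∑ j ∈ Finset.range n, (g j - g (j+1))
        < ∑ _j ∈ Finset.range n, (1 / (3 * (n:ℝ))) := by
          apply Finset.sum_lt_sum_of_nonempty hne
          intro j hj
          exact hterm ⟨j, Finset.mem_range.mp hj⟩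
      _ = n * (1 / (3 * n)) := by
          rw [Finset.sum_const, Finset.card_range, nsmul_eq_mul]
  have hnn : (n:ℝ) ≠ 0 := by positivity
  have : (n:ℝ) * (1 / (3 * n)) = 1/3 := by field_simp
  rw [hsum, hgn, this] at hlt
  linarith
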